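/- Let E be an equational theory for which a complete E-unification algorithm exists. If (Δ₀ ⊢ s₀) ⤳θ R,E (Δ₁ ⊢ s₁) is a one-step nominal R,E-narrowing step with substitution θ, then Δ₁ ⊢ s₀θ →R,E s₁. -/

import Mathlib

namespace NominalNarrowing

/-- Atoms (object-level names). -/
abbrev Atom := ℕ
/-- (Meta-level) variables. -/
abbrev Var := ℕ

/-- A finite permutation of atoms, represented as a list of swaps. -/
abbrev Perm := List (Atom × Atom)

/-- Action of a single swap on an atom. -/
def swapAtom (p : Atom × Atom) (a : Atom) : Atom :=
  if a = p.1 then p.2 else if a = p.2 then p.1 else a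

/-- Action of a permutation (list of swaps) on an atom. -/
def permAtom (π : Perm) (a : Atom) : Atom := π.foldr swapAtom a

/-- Nominal terms over a signature `F`. -/
inductive Term (F : Type) where
  | atom : Atom → Term F
  | var  : Perm → Var → Term F
  | abs  : Atom → Term F → Term F
  | fn   : F → List (Term F) → Term F

variable {F : Type}

/-- Permutation action on terms. -/
def permTerm (π : Perm) : Term F → Term F
  | .atom a => .atom (permAtom π a)
  | .var π' X => .var (π ++ π') X
  | .abs a t => .abs (permAtom π a) (permTerm π t)
  | .fn f ts => .fn f (ts.attach.map fun x => permTerm π x.1)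
decreasing_by
  all_goals simp
  all_goals (have := List.sizeOf_lt_of_mem x.2; omega)

/-- Substitutions map variables to terms. -/
abbrev Subst (F : Type) := Var → Term F

/-- Substitution action on terms (possibly capturing). -/
def applySubst (θ : Subst F) : Term F → Term F
  | .atom a => .atom a
  | .var π X => permTerm π (θ X)
  | .abs a t => .abs a (applySubst θ t)
  | .fn f ts => .fn f (ts.attach.map fun x => applySubst θ x.1)
decreasing_by
  all_goals simp
  all_goals (have := List.sizeOf_lt_of_mem x.2; omega)

/-- The identity substitution. -/
def idSubst : Subst F := fun X => .var [] X

/-- Composition of substitutions: `X (compSubst σ τ) = (X σ) τ`. -/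
def compSubst (σ τ : Subst F) : Subst F := fun X => applySubst τ (σ X)

/-- Composition `θ₀θ₁…θ_{n-1}` of a sequence of substitutions. -/
def compAll (θseq : ℕ → Subst F) (n : ℕ) : Subst F :=
  ((List.range n).map θseq).foldr compSubst idSubst

/-- Atoms occurring in a term (including those in permutation moderations). -/
def Term.atoms : Term F → Finset Atom
  | .atom a => {a}
  | .var π _ => (π.map Prod.fst).toFinset ∪ (π.map Prod.snd).toFinset
  | .abs a t => insert a t.atoms
  | .fn _ ts => (ts.attach.map fun x => Term.atoms x.1).foldr (· ∪ ·) ∅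
decreasing_by
  all_goals simp
  all_goals (have := List.sizeOf_lt_of_mem x.2; omega)

/-- Variables occurring in a term. -/
def Term.vars : Term F → Finset Var
  | .atom _ => ∅
  | .var _ X => {X}
  | .abs _ t => t.vars
  | .fn _ ts => (ts.attach.map fun x => Term.vars x.1).foldr (· ∪ ·) ∅
decreasing_by
  all_goals simp
  all_goals (have := List.sizeOf_lt_of_mem x.2; omega)

/-- A freshness context: a finite set of primitive constraints `a#X`. -/
abbrev Ctx := Finset (Atom × Var)

def ctxAtoms (Δ : Ctx) : Finset Atom := Δ.image Prod.fst
def ctxVars (Δ : Ctx) : Finset Var := Δ.image Prod.snd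

/-- The freshness judgement `Δ ⊢ a # t`. -/
inductive Fresh (Δ : Ctx) : Atom → Term F → Prop
  | atom {a b : Atom} : a ≠ b → Fresh Δ a (.atom b)
  | var {π : Perm} {a : Atom} {X : Var} :
      (permAtom π.reverse a, X) ∈ Δ → Fresh Δ a (.var π X)
  | abs_same {a : Atom} {t : Term F} : Fresh Δ a (.abs a t)
  | abs_diff {a b : Atom} {t : Term F} : a ≠ b → Fresh Δ a t → Fresh Δ a (.abs b t)
  | fn {a : Atom} {f : F} {ts : List (Term F)} :
      (∀ t ∈ ts, Fresh Δ a t) → Fresh Δ a (.fn f ts)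

/-- The α-equivalence judgement `Δ ⊢ s ≈α t`. -/
inductive Aeq (Δ : Ctx) : Term F → Term F → Prop
  | atom (a : Atom) : Aeq Δ (.atom a) (.atom a)
  | var {π π' : Perm} {X : Var} :
      (∀ a : Atom, permAtom π a ≠ permAtom π' a → (a, X) ∈ Δ) →
      Aeq Δ (.var π X) (.var π' X)
  | fn {f : F} {ts ss : List (Term F)} :
      List.Forall₂ (Aeq Δ) ts ss → Aeq Δ (.fn f ts) (.fn f ss)
  | abs_same {a : Atom} {t s : Term F} : Aeq Δ t s → Aeq Δ (.abs a t) (.abs a s)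
  | abs_diff {a b : Atom} {t s : Term F} :
      a ≠ b → Aeq Δ t (permTerm [(a, b)] s) → Fresh Δ a s →
      Aeq Δ (.abs a t) (.abs b s)

/-- `SatCtx Δ' θ Δ` means `Δ' ⊢ Δθ`, i.e. `Δ' ⊢ a # Xθ` for each `a#X ∈ Δ`.
    (Equivalently, θ satisfies Δ with Δ'.) -/
def SatCtx (Δ' : Ctx) (θ : Subst F) (Δ : Ctx) : Prop :=
  ∀ p ∈ Δ, Fresh Δ' p.1 (θ p.2)

/-- A rule (or identity) in context: `Nab ⊢ l → r` (resp. `Nab ⊢ l ≈ r`). -/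
abbrev Rule (F : Type) := Ctx × Term F × Term F

/-- Permutation action on contexts. -/
def permCtx (π : Perm) (Δ : Ctx) : Ctx := Δ.image fun p => (permAtom π p.1, p.2)

/-- Permutation action on rules/identities. -/
def permRule (π : Perm) (r : Rule F) : Rule F :=
  (permCtx π r.1, permTerm π r.2.1, permTerm π r.2.2)

/-- An equivariant set of rules/identities. -/
def Equivariant (S : Set (Rule F)) : Prop := ∀ (π : Perm), ∀ r ∈ S, permRule π r ∈ S

/-- A set of identities closed under symmetry. -/
def SymmClosed (S : Set (Rule F)) : Prop := ∀ r ∈ S, ((r.1, r.2.2, r.2.1) : Rule F) ∈ S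

/-- Subterm of `t` at position `p` (positions as paths). -/
def subtermAt : List ℕ → Term F → Option (Term F)
  | [], t => some t
  | 0 :: p, .abs _ t => subtermAt p t
  | i :: p, .fn _ ts => (ts[i]?).bind fun u => subtermAt p u
  | _, _ => none

/-- Replace the subterm of `t` at position `p` by `new` (the paper's `C[new]`). -/
def replaceAt : List ℕ → Term F → Term F → Option (Term F)
  | [], _, new => some new
  | 0 :: p, .abs a t, new => (replaceAt p t new).map (Term.abs a)
  | i :: p, .fn f ts, new =>
      (ts[i]?).bind fun u => (replaceAt p u new).map fun u' => Term.fn f (ts.set i u')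
  | _, _, _ => none

/-- One-step equality `Δ ⊢ s ≈E t` generated by the identities `E`. -/
def EqStep (E : Set (Rule F)) (Δ : Ctx) (s t : Term F) : Prop :=
  ∃ ax ∈ E, ∃ (p : List ℕ) (θ : Subst F) (Γ : Ctx) (w w' : Term F),
    (∀ c ∈ Γ, c.1 ∉ ctxAtoms Δ ∪ s.atoms ∪ t.atoms) ∧
    SatCtx (Δ ∪ Γ) θ ax.1 ∧
    subtermAt p w = some (applySubst θ ax.2.1) ∧
    Aeq (Δ ∪ Γ) s w ∧
    replaceAt p w (applySubst θ ax.2.2) = some w' ∧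
    Aeq (Δ ∪ Γ) w' t

/-- The equational theory `Δ ⊢ s ≈E t` : reflexive-transitive closure of one-step
    equality (with α-equivalence embedded). -/
def EqE (E : Set (Rule F)) (Δ : Ctx) : Term F → Term F → Prop :=
  Relation.ReflTransGen (fun s t => EqStep E Δ s t ∨ Aeq Δ s t)

/-- Symmetric closure of a set of identities. -/
def symmCl (S : Set (Rule F)) : Set (Rule F) :=
  S ∪ {r | ∃ q ∈ S, r = ((q.1, q.2.2, q.2.1) : Rule F)}

/-- The equational theory `≈T` generated by `R ∪ E` together with α-equivalence. -/
def EqT (R E : Set (Rule F)) (Δ : Ctx) : Term F → Term F → Prop :=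
  EqE (symmCl (R ∪ E)) Δ

/-- Rewriting with a given rule at a given position, matching modulo `E`:
    the core of `Δ ⊢ s →R,E t`. -/
def RewAt (E : Set (Rule F)) (Δ : Ctx) (r : Rule F) (p : List ℕ) (s t : Term F) : Prop :=
  ∃ (s' u : Term F) (θ : Subst F),
    subtermAt p s = some s' ∧
    SatCtx Δ θ r.1 ∧
    EqE E Δ s' (applySubst θ r.2.1) ∧
    replaceAt p s (applySubst θ r.2.2) = some u ∧
    Aeq Δ u t

/-- Rewriting with a given rule at a given position, matching modulo α only:
    the core of plain nominal rewriting `Δ ⊢ s →R t`. -/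
def RewAtR (Δ : Ctx) (r : Rule F) (p : List ℕ) (s t : Term F) : Prop :=
  ∃ (s' u : Term F) (θ : Subst F),
    subtermAt p s = some s' ∧
    SatCtx Δ θ r.1 ∧
    Aeq Δ s' (applySubst θ r.2.1) ∧
    replaceAt p s (applySubst θ r.2.2) = some u ∧
    Aeq Δ u t

/-- Plain nominal rewriting `Δ ⊢ s →R t`. -/
def RewR (R : Set (Rule F)) (Δ : Ctx) (s t : Term F) : Prop :=
  ∃ r ∈ R, ∃ p : List ℕ, RewAtR Δ r p s t

/-- Nominal rewriting modulo `E`: `Δ ⊢ s →R,E t`. -/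
def RewRE (R E : Set (Rule F)) (Δ : Ctx) (s t : Term F) : Prop :=
  ∃ r ∈ R, ∃ p : List ℕ, RewAt E Δ r p s t

/-- The relation `→R/E  =  ≈E ∘ →R ∘ ≈E`. -/
def RewRmodE (R E : Set (Rule F)) (Δ : Ctx) (s t : Term F) : Prop :=
  ∃ s' t', EqE E Δ s s' ∧ RewR R Δ s' t' ∧ EqE E Δ t' t

/-- One-step nominal narrowing with a given rule at a given position, modulo `E`. -/
def NarrAt (E : Set (Rule F)) (Δ : Ctx) (r : Rule F) (p : List ℕ) (s : Term F)
    (θ : Subst F) (Δ' : Ctx) (t : Term F) : Prop :=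
  ∃ (s' u : Term F),
    subtermAt p s = some s' ∧
    SatCtx Δ' θ r.1 ∧
    SatCtx Δ' θ Δ ∧
    EqE E Δ' (applySubst θ s') (applySubst θ r.2.1) ∧
    replaceAt p s r.2.2 = some u ∧
    Aeq Δ' (applySubst θ u) t

/-- One-step nominal narrowing with a given rule at a given position (E = ∅, α only). -/
def NarrAtR (Δ : Ctx) (r : Rule F) (p : List ℕ) (s : Term F)
    (θ : Subst F) (Δ' : Ctx) (t : Term F) : Prop :=
  ∃ (s' u : Term F),
    subtermAt p s = some s' ∧
    SatCtx Δ' θ r.1 ∧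
    SatCtx Δ' θ Δ ∧
    Aeq Δ' (applySubst θ s') (applySubst θ r.2.1) ∧
    replaceAt p s r.2.2 = some u ∧
    Aeq Δ' (applySubst θ u) t

/-- One-step nominal `R,E`-narrowing `(Δ ⊢ s) ⤳θ (Δ' ⊢ t)`. -/
def NarrRE (R E : Set (Rule F)) (Δ : Ctx) (s : Term F) (θ : Subst F)
    (Δ' : Ctx) (t : Term F) : Prop :=
  ∃ r ∈ R, ∃ p : List ℕ, NarrAt E Δ r p s θ Δ' t

/-- One-step plain nominal narrowing (E = ∅). -/
def NarrR (R : Set (Rule F)) (Δ : Ctx) (s : Term F) (θ : Subst F)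
    (Δ' : Ctx) (t : Term F) : Prop :=
  ∃ r ∈ R, ∃ p : List ℕ, NarrAtR Δ r p s θ Δ' t

/-! ### Freshened variants and closed rules -/

def ruleAtoms (r : Rule F) : Finset Atom := ctxAtoms r.1 ∪ r.2.1.atoms ∪ r.2.2.atoms
def ruleVars (r : Rule F) : Finset Var := ctxVars r.1 ∪ r.2.1.vars ∪ r.2.2.vars

/-- Renaming of atoms and variables in a term. -/
def renameTerm (fa : Atom → Atom) (fv : Var → Var) : Term F → Term F
  | .atom a => .atom (fa a)
  | .var π X => .var (π.map fun p => (fa p.1, fa p.2)) (fv X)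
  | .abs a t => .abs (fa a) (renameTerm fa fv t)
  | .fn f ts => .fn f (ts.attach.map fun x => renameTerm fa fv x.1)
decreasing_by
  all_goals simp
  all_goals (have := List.sizeOf_lt_of_mem x.2; omega)

def renameCtx (fa : Atom → Atom) (fv : Var → Var) (Δ : Ctx) : Ctx :=
  Δ.image fun p => (fa p.1, fv p.2)

def renameRule (fa : Atom → Atom) (fv : Var → Var) (r : Rule F) : Rule F :=
  (renameCtx fa fv r.1, renameTerm fa fv r.2.1, renameTerm fa fv r.2.2)

/-- `r'` is a freshened variant of `r`, with fresh atoms/variables avoiding `A`/`V`. -/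
def IsFreshenedAway (r r' : Rule F) (A : Finset Atom) (V : Finset Var) : Prop :=
  ∃ (fa : Atom → Atom) (fv : Var → Var),
    Function.Injective fa ∧ Function.Injective fv ∧
    (∀ a ∈ ruleAtoms r, fa a ∉ A ∪ ruleAtoms r) ∧
    (∀ X ∈ ruleVars r, fv X ∉ V ∪ ruleVars r) ∧
    r' = renameRule fa fv r

/-- A rule (or axiom) `Nab ⊢ l → r` is closed: any freshened variant matches back. -/
def ClosedRule (r : Rule F) : Prop :=
  ∀ r' : Rule F, IsFreshenedAway r r' (ruleAtoms r) (ruleVars r) →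
    ∃ θ : Subst F,
      SatCtx (r.1 ∪ (ruleAtoms r') ×ˢ ruleVars r) θ r'.1 ∧
      Aeq (r.1 ∪ (ruleAtoms r') ×ˢ ruleVars r) (applySubst θ r'.2.1) r.2.1 ∧
      Aeq (r.1 ∪ (ruleAtoms r') ×ˢ ruleVars r) (applySubst θ r'.2.2) r.2.2

def ClosedSet (S : Set (Rule F)) : Prop := ∀ r ∈ S, ClosedRule r

/-- Closed rewriting at a rule/position, modulo `E`: uses a freshened variant of the
rule and the extended freshness context `Δ, A(R̂)#V(Δ,s,t)`. -/
def CRewAt (E : Set (Rule F)) (Δ : Ctx) (r : Rule F) (p : List ℕ) (s t : Term F) : Prop :=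
  ∃ r' : Rule F,
    IsFreshenedAway r r' (ctxAtoms Δ ∪ s.atoms ∪ t.atoms) (ctxVars Δ ∪ s.vars ∪ t.vars) ∧
    RewAt E (Δ ∪ (ruleAtoms r') ×ˢ (ctxVars Δ ∪ s.vars ∪ t.vars)) r' p s t

/-- Closed rewriting at a rule/position, modulo α only. -/
def CRewAtR (Δ : Ctx) (r : Rule F) (p : List ℕ) (s t : Term F) : Prop :=
  ∃ r' : Rule F,
    IsFreshenedAway r r' (ctxAtoms Δ ∪ s.atoms ∪ t.atoms) (ctxVars Δ ∪ s.vars ∪ t.vars) ∧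
    RewAtR (Δ ∪ (ruleAtoms r') ×ˢ (ctxVars Δ ∪ s.vars ∪ t.vars)) r' p s t

/-- One-step closed `R,E`-rewriting `Δ ⊢ s →c R,E t`. -/
def CRewRE (R E : Set (Rule F)) (Δ : Ctx) (s t : Term F) : Prop :=
  ∃ r ∈ R, ∃ p : List ℕ, CRewAt E Δ r p s t

/-- One-step closed nominal rewriting (E = ∅). -/
def CRewR (R : Set (Rule F)) (Δ : Ctx) (s t : Term F) : Prop :=
  ∃ r ∈ R, ∃ p : List ℕ, CRewAtR Δ r p s t

/-- Closed narrowing at a rule/position modulo `E`: conditions are checked in the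
extended context `Δ', A(R̂)#V(Δ,s,t)`. -/
def CNarrAt (E : Set (Rule F)) (Δ : Ctx) (r : Rule F) (p : List ℕ) (s : Term F)
    (θ : Subst F) (Δ' : Ctx) (t : Term F) : Prop :=
  ∃ r' : Rule F,
    IsFreshenedAway r r' (ctxAtoms Δ ∪ s.atoms ∪ t.atoms) (ctxVars Δ ∪ s.vars ∪ t.vars) ∧
    NarrAt E Δ r' p s θ (Δ' ∪ (ruleAtoms r') ×ˢ (ctxVars Δ ∪ s.vars ∪ t.vars)) t

/-- Closed narrowing at a rule/position, modulo α only. -/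
def CNarrAtR (Δ : Ctx) (r : Rule F) (p : List ℕ) (s : Term F)
    (θ : Subst F) (Δ' : Ctx) (t : Term F) : Prop :=
  ∃ r' : Rule F,
    IsFreshenedAway r r' (ctxAtoms Δ ∪ s.atoms ∪ t.atoms) (ctxVars Δ ∪ s.vars ∪ t.vars) ∧
    NarrAtR Δ r' p s θ (Δ' ∪ (ruleAtoms r') ×ˢ (ctxVars Δ ∪ s.vars ∪ t.vars)) t

/-- One-step closed `R,E`-narrowing `(Δ ⊢ s) ⤳c θ (Δ' ⊢ t)`. -/
def CNarrRE (R E : Set (Rule F)) (Δ : Ctx) (s : Term F) (θ : Subst F)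
    (Δ' : Ctx) (t : Term F) : Prop :=
  ∃ r ∈ R, ∃ p : List ℕ, CNarrAt E Δ r p s θ Δ' t

/-- One-step closed nominal narrowing (E = ∅). -/
def CNarrR (R : Set (Rule F)) (Δ : Ctx) (s : Term F) (θ : Subst F)
    (Δ' : Ctx) (t : Term F) : Prop :=
  ∃ r ∈ R, ∃ p : List ℕ, CNarrAtR Δ r p s θ Δ' t

/-! ### Normal forms and abstract properties -/

def NFRE (R E : Set (Rule F)) (Δ : Ctx) (t : Term F) : Prop := ¬ ∃ u, RewRE R E Δ t u
def NFRmodE (R E : Set (Rule F)) (Δ : Ctx) (t : Term F) : Prop := ¬ ∃ u, RewRmodE R E Δ t u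
def NFR (R : Set (Rule F)) (Δ : Ctx) (t : Term F) : Prop := ¬ ∃ u, RewR R Δ t u

/-- `R` is E-terminating: there is no infinite `→R/E` sequence. -/
def ETerminating (R E : Set (Rule F)) : Prop :=
  ∀ Δ : Ctx, ¬ ∃ f : ℕ → Term F, ∀ n, RewRmodE R E Δ (f n) (f (n + 1))

/-- `R` is E-confluent (confluence of `→R/E` modulo `E`). -/
def EConfluentRmodE (R E : Set (Rule F)) : Prop :=
  ∀ (Δ : Ctx) (s t u : Term F),
    Relation.ReflTransGen (RewRmodE R E Δ) s t →
    Relation.ReflTransGen (RewRmodE R E Δ) s u →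
    ∃ t' u', Relation.ReflTransGen (RewRmodE R E Δ) t t' ∧
      Relation.ReflTransGen (RewRmodE R E Δ) u u' ∧ EqE E Δ t' u'

/-- `R,E` is E-confluent (confluence of `→R,E` modulo `E`). -/
def EConfluentRE (R E : Set (Rule F)) : Prop :=
  ∀ (Δ : Ctx) (s t u : Term F),
    Relation.ReflTransGen (RewRE R E Δ) s t →
    Relation.ReflTransGen (RewRE R E Δ) s u →
    ∃ t' u', Relation.ReflTransGen (RewRE R E Δ) t t' ∧
      Relation.ReflTransGen (RewRE R E Δ) u u' ∧ EqE E Δ t' u'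

/-- `R` is E-convergent: E-confluent and E-terminating. -/
def EConvergent (R E : Set (Rule F)) : Prop := EConfluentRmodE R E ∧ ETerminating R E

/-- `→R,E` is E-coherent. -/
def ECoherent (R E : Set (Rule F)) : Prop :=
  ∀ (Δ : Ctx) (t₁ t₂ t₃ : Term F), EqE E Δ t₁ t₂ → RewRE R E Δ t₁ t₃ →
    ∃ t₄ t₅ t₆, Relation.ReflTransGen (RewRE R E Δ) t₃ t₄ ∧
      RewRE R E Δ t₂ t₅ ∧ Relation.ReflTransGen (RewRE R E Δ) t₅ t₆ ∧
      EqE E Δ t₄ t₆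

/-- `→R` is terminating. -/
def Terminating (R : Set (Rule F)) : Prop :=
  ∀ Δ : Ctx, ¬ ∃ f : ℕ → Term F, ∀ n, RewR R Δ (f n) (f (n + 1))

/-- `→R` is confluent (modulo α). -/
def Confluent (R : Set (Rule F)) : Prop :=
  ∀ (Δ : Ctx) (s t u : Term F),
    Relation.ReflTransGen (RewR R Δ) s t →
    Relation.ReflTransGen (RewR R Δ) s u →
    ∃ t' u', Relation.ReflTransGen (RewR R Δ) t t' ∧
      Relation.ReflTransGen (RewR R Δ) u u' ∧ Aeq Δ t' u'

/-- `R` is convergent: terminating and confluent. -/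
def Convergent (R : Set (Rule F)) : Prop := Terminating R ∧ Confluent R

/-! ### E-unification -/

/-- `(Δ',θ)` is an E-unifier of `(Nab ⊢ l)` and `(Δ ⊢ s)`. -/
def EUnifier (E : Set (Rule F)) (Nab : Ctx) (l : Term F) (Δ : Ctx) (s : Term F)
    (sol : Ctx × Subst F) : Prop :=
  SatCtx sol.1 sol.2 Nab ∧ SatCtx sol.1 sol.2 Δ ∧
  EqE E sol.1 (applySubst sol.2 l) (applySubst sol.2 s)

/-- `(Δ₁,θ₁) ≤E (Δ₂,θ₂)`: `(Δ₁,θ₁)` is more general than `(Δ₂,θ₂)`. -/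
def LeE (E : Set (Rule F)) (p q : Ctx × Subst F) : Prop :=
  ∃ θ' : Subst F, (∀ X : Var, EqE E q.1 (applySubst θ' (p.2 X)) (q.2 X)) ∧
    SatCtx q.1 θ' p.1

/-- `≤E` restricted to a finite set `V` of variables. -/
def LeEV (E : Set (Rule F)) (V : Finset Var) (p q : Ctx × Subst F) : Prop :=
  ∃ θ' : Subst F, (∀ X ∈ V, EqE E q.1 (applySubst θ' (p.2 X)) (q.2 X)) ∧
    SatCtx q.1 θ' p.1

/-- A complete E-unification algorithm exists: every E-unification problem has a
complete set of E-solutions. -/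
def CompleteEUnifAlg (E : Set (Rule F)) : Prop :=
  ∀ (Nab : Ctx) (l : Term F) (Δ : Ctx) (s : Term F),
    ∃ S : Set (Ctx × Subst F),
      (∀ sol ∈ S, EUnifier E Nab l Δ s sol) ∧
      ∀ sol, EUnifier E Nab l Δ s sol → ∃ p ∈ S, LeE E p sol

/-- `R ∪ E_α` is well-structured: `R` is E-convergent and a complete E-unification
algorithm exists. -/
def WellStructured (R E : Set (Rule F)) : Prop := EConvergent R E ∧ CompleteEUnifAlg E

/-- `θ` is normalised in `Δ` w.r.t. `→R,E`. -/
def NormalisedRE (R E : Set (Rule F)) (Δ : Ctx) (θ : Subst F) : Prop :=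
  ∀ X : Var, NFRE R E Δ (θ X)

/-- `θ` is normalised in `Δ` w.r.t. `→R`. -/
def NormalisedR (R : Set (Rule F)) (Δ : Ctx) (θ : Subst F) : Prop :=
  ∀ X : Var, NFR R Δ (θ X)

/-- The domain of a substitution. -/
def domSubst (θ : Subst F) : Set Var := {X | θ X ≠ Term.var [] X}

/-! ### Positions, basedness, innermost -/

/-- Ground (non-variable) positions of a term. -/
def groundPos (t : Term F) : Set (List ℕ) :=
  {p | ∃ u, subtermAt p t = some u ∧ ∀ (π : Perm) (X : Var), u ≠ Term.var π X}

/-- The update of the set of basic positions after a step at position `p`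
with a rule whose right-hand side is `rhs`. -/
def nextU (U : Set (List ℕ)) (p : List ℕ) (rhs : Term F) : Set (List ℕ) :=
  (U \ {q | q ∈ U ∧ p <+: q}) ∪ {q | ∃ q' ∈ groundPos rhs, q = p ++ q'}

/-- A (finite) derivation reducing at positions `pseq` with rules whose right-hand
sides are `rhs` is based on `U₀`. -/
def BasedSeq (U₀ : Set (List ℕ)) (n : ℕ) (pseq : ℕ → List ℕ) (rhs : ℕ → Term F) : Prop :=
  ∃ U : ℕ → Set (List ℕ), U 0 = U₀ ∧
    ∀ i < n, pseq i ∈ U i ∧ U (i + 1) = nextU (U i) (pseq i) (rhs i)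

/-- An infinite derivation based on `U₀` (for non-termination statements). -/
def BasedInf (U₀ : Set (List ℕ)) (pseq : ℕ → List ℕ) (rhs : ℕ → Term F) : Prop :=
  ∃ U : ℕ → Set (List ℕ), U 0 = U₀ ∧
    ∀ i, pseq i ∈ U i ∧ U (i + 1) = nextU (U i) (pseq i) (rhs i)

/-- A rewrite step at position `p` in `s` is innermost (no `→R` step strictly below). -/
def InnermostAt (R : Set (Rule F)) (Δ : Ctx) (p : List ℕ) (s : Term F) : Prop :=
  ∀ q : List ℕ, p <+: q → p ≠ q → ¬ ∃ r ∈ R, ∃ t, RewAtR Δ r q s t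

/-- A closed rewrite step at position `p` in `s` is innermost. -/
def CInnermostAt (R : Set (Rule F)) (Δ : Ctx) (p : List ℕ) (s : Term F) : Prop :=
  ∀ q : List ℕ, p <+: q → p ≠ q → ¬ ∃ r ∈ R, ∃ t, CRewAtR Δ r q s t

/-! Narrowing unifies and rewrites the uninstantiated term `s₀`. Instantiation by `θ` commutes
with taking and with replacing the subterm at a position, so the same rule at the same position,
with matcher `θ`, rewrites `s₀θ` to `(C[r])θ ≈α s₁`. -/

lemma applySubst_fn (θ : Subst F) (f : F) (ts : List (Term F)) :
    applySubst θ (.fn f ts) = .fn f (ts.map (applySubst θ)) := by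
  rw [applySubst]
  simp

lemma subtermAt_cons_fn (i : ℕ) (p : List ℕ) (f : F) (ts : List (Term F)) :
    subtermAt (i :: p) (.fn f ts) = ts[i]?.bind (subtermAt p) := by
  cases i <;> rfl

lemma replaceAt_cons_fn (i : ℕ) (p : List ℕ) (f : F) (ts : List (Term F)) (new : Term F) :
    replaceAt (i :: p) (.fn f ts) new =
      ts[i]?.bind fun u => (replaceAt p u new).map fun u' => .fn f (ts.set i u') := by
  cases i <;> rfl

lemma subtermAt_applySubst (θ : Subst F) {p : List ℕ} {s s' : Term F}
    (h : subtermAt p s = some s') : subtermAt p (applySubst θ s) = some (applySubst θ s') := by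
  induction p generalizing s with
  | nil => simp_all [subtermAt]
  | cons i p ih =>
    cases s with
    | atom | var => simp [subtermAt] at h
    | abs a t =>
      cases i with
      | zero => simpa [applySubst, subtermAt] using ih h
      | succ => simp [subtermAt] at h
    | fn f ts =>
      rw [subtermAt_cons_fn] at h
      obtain ⟨u, hu, hsub⟩ := Option.bind_eq_some_iff.mp h
      simp [applySubst_fn, subtermAt_cons_fn, hu, ih hsub]

lemma replaceAt_applySubst (θ : Subst F) {p : List ℕ} {s new u : Term F}
    (h : replaceAt p s new = some u) :
    replaceAt p (applySubst θ s) (applySubst θ new) = some (applySubst θ u) := by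
  induction p generalizing s u with
  | nil => simp_all [replaceAt]
  | cons i p ih =>
    cases s with
    | atom | var => simp [replaceAt] at h
    | abs a t =>
      cases i with
      | zero =>
        obtain ⟨v, hv, rfl⟩ := Option.map_eq_some_iff.mp h
        simp [applySubst, replaceAt, ih hv]
      | succ => simp [replaceAt] at h
    | fn f ts =>
      rw [replaceAt_cons_fn] at h
      obtain ⟨w, hw, hmap⟩ := Option.bind_eq_some_iff.mp h
      obtain ⟨v, hv, rfl⟩ := Option.map_eq_some_iff.mp hmap
      simp [applySubst_fn, replaceAt_cons_fn, hw, ih hv, List.map_set]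

theorem narrowing_step_to_rewriting_step_general (R E : Set (Rule F))
    (Δ₀ Δ₁ : Ctx) (s₀ s₁ : Term F) (θ : Subst F)
    (h : NarrRE R E Δ₀ s₀ θ Δ₁ s₁) :
    RewRE R E Δ₁ (applySubst θ s₀) s₁ := by
  obtain ⟨r, hr, p, s', u, hsub, hsat, -, heq, hrep, haeq⟩ := h
  exact ⟨r, hr, p, applySubst θ s', applySubst θ u, θ,
    subtermAt_applySubst θ hsub, hsat, heq, replaceAt_applySubst θ hrep, haeq⟩

/-- A one-step nominal `R,E`-narrowing step `(Δ₀ ⊢ s₀) ⤳θ (Δ₁ ⊢ s₁)` yields a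
rewriting step `Δ₁ ⊢ s₀θ →R,E s₁`. -/
theorem narrowing_step_to_rewriting_step (R E : Set (Rule F))
    (hReqv : Equivariant R) (hEeqv : Equivariant E) (hEsymm : SymmClosed E)
    (halg : CompleteEUnifAlg E)
    (Δ₀ Δ₁ : Ctx) (s₀ s₁ : Term F) (θ : Subst F)
    (h : NarrRE R E Δ₀ s₀ θ Δ₁ s₁) :
    RewRE R E Δ₁ (applySubst θ s₀) s₁ :=
  narrowing_step_to_rewriting_step_general R E Δ₀ Δ₁ s₀ s₁ θ h

end NominalNarrowing
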